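/- arXiv:2002.07088 — 2 statements merged into one kernel-verified Lean document; each statement's English description precedes it below -/
import Mathlib

section
/- Let k ≥ 2 and consider the k×k grid graph on vertex set (Fin k) × (Fin k). Every subset M of the vertices that contains all vertices (i, 0) of row 0 and all vertices (i, j) whose column index i is odd induces a connected subgraph of the k×k grid graph. -/
/-!
Row 0 and every odd column lie in `M` and are paths of the grid, and each odd column meets
row 0, so these vertices form one component. Any other vertex `(i, j)` of `M` lies in an even
column, and since `k ≥ 2` one of the columns `i ± 1` exists and is odd; the horizontal edge to
it joins `(i, j)` to that component.
-/

/-- The `k × k` grid graph on vertex set `Fin k × Fin k`: two vertices are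
adjacent iff they agree in one coordinate and differ by exactly 1 in the other. -/
def gridGraph (k : ℕ) : SimpleGraph (Fin k × Fin k) where
  Adj a b :=
    (a.1 = b.1 ∧ (a.2.val + 1 = b.2.val ∨ b.2.val + 1 = a.2.val)) ∨
    (a.2 = b.2 ∧ (a.1.val + 1 = b.1.val ∨ b.1.val + 1 = a.1.val))
  symm := by
    constructor
    intro a b h
    rcases h with ⟨h1, h2⟩ | ⟨h1, h2⟩
    · exact Or.inl ⟨h1.symm, h2.symm⟩
    · exact Or.inr ⟨h1.symm, h2.symm⟩
  loopless := by
    constructor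
    intro a h
    rcases h with ⟨_, h⟩ | ⟨_, h⟩ <;> omega

namespace SimpleGraph

theorem reachable_of_adj_of_val_succ_eq {V : Type*} {G : SimpleGraph V} {n : ℕ}
    (f : Fin n → V) (hf : ∀ a b : Fin n, a.val + 1 = b.val → G.Adj (f a) (f b))
    (a b : Fin n) : G.Reachable (f a) (f b) :=
  let φ : pathGraph n →g G :=
    ⟨f, fun h => (pathGraph_adj.mp h).elim (hf _ _) fun h => (hf _ _ h).symm⟩
  (pathGraph_preconnected n a b).map φ

end SimpleGraph

namespace gridGraph

variable {k : ℕ} {M : Set (Fin k × Fin k)}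

theorem induce_reachable_of_column_subset (i : Fin k) (hcol : ∀ j, (i, j) ∈ M)
    (j j' : Fin k) :
    ((gridGraph k).induce M).Reachable ⟨(i, j), hcol j⟩ ⟨(i, j'), hcol j'⟩ :=
  SimpleGraph.reachable_of_adj_of_val_succ_eq (fun j : Fin k => (⟨(i, j), hcol j⟩ : M))
    (fun _ _ h => Or.inl ⟨rfl, Or.inl h⟩) j j'

theorem induce_reachable_of_row_subset (j : Fin k) (hrow : ∀ i, (i, j) ∈ M)
    (i i' : Fin k) :
    ((gridGraph k).induce M).Reachable ⟨(i, j), hrow i⟩ ⟨(i', j), hrow i'⟩ :=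
  SimpleGraph.reachable_of_adj_of_val_succ_eq (fun i : Fin k => (⟨(i, j), hrow i⟩ : M))
    (fun _ _ h => Or.inr ⟨rfl, Or.inl h⟩) i i'

end gridGraph

theorem Fin.exists_odd_val_adjacent {k : ℕ} (hk : 2 ≤ k) (i : Fin k) (hi : Even i.val) :
    ∃ i' : Fin k, Odd i'.val ∧ (i.val + 1 = i'.val ∨ i'.val + 1 = i.val) := by
  obtain ⟨t, ht⟩ := hi
  by_cases h : i.val + 1 < k
  · exact ⟨⟨i.val + 1, h⟩, ⟨t, by simp only; omega⟩, Or.inl rfl⟩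
  · exact ⟨⟨i.val - 1, by omega⟩, ⟨t - 1, by simp only; omega⟩,
      Or.inr (by simp only; omega)⟩

/-- For `k ≥ 2`, every set `M` of vertices of the `k × k` grid graph containing
all vertices `(i, 0)` of row `0` and all vertices `(i, j)` whose column index `i`
is odd induces a connected subgraph. -/
theorem gridGraph_induce_row0_oddColumns_connected
    (k : ℕ) (hk : 2 ≤ k) (M : Set (Fin k × Fin k))
    (hrow0 : ∀ i : Fin k, (i, (⟨0, by omega⟩ : Fin k)) ∈ M)
    (hodd : ∀ i j : Fin k, Odd i.val → (i, j) ∈ M) :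
    (((gridGraph k).induce M)).Connected := by
  set G := (gridGraph k).induce M
  set zero : Fin k := ⟨0, by omega⟩
  have oddColumn (i j : Fin k) (hi : Odd i.val) :
      G.Reachable ⟨(zero, zero), hrow0 zero⟩ ⟨(i, j), hodd i j hi⟩ :=
    (gridGraph.induce_reachable_of_row_subset zero hrow0 zero i).trans
      (gridGraph.induce_reachable_of_column_subset i (hodd i · hi) zero j)
  refine (SimpleGraph.connected_iff_exists_forall_reachable G).mpr
    ⟨⟨(zero, zero), hrow0 zero⟩, ?_⟩
  rintro ⟨⟨i, j⟩, hv⟩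
  rcases Nat.even_or_odd i.val with hi | hi
  · obtain ⟨i', hi', hii'⟩ := Fin.exists_odd_val_adjacent hk i hi
    have hadj : G.Adj ⟨(i', j), hodd i' j hi'⟩ ⟨(i, j), hv⟩ :=
      Or.inr ⟨rfl, hii'.symm⟩
    exact (oddColumn i' j hi').trans hadj.reachable
  · exact oddColumn i j hi
end

section
/- Let k ≥ 2. The number of subsets M of the vertex set (Fin k) × (Fin k) whose induced subgraph in the k×k grid graph is connected is at least 2^{(k−1)·⌈k/2⌉}. In particular, the number of masks of the k×k grid is exponential in k², so enumerating all masks is infeasible. -/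
def baseSet (k : ℕ) : Set (Fin k × Fin k) := {v | v.2.val = 0 ∨ Odd v.1.val}

lemma connected_of_base_subset {k : ℕ} (hk : 2 ≤ k) (M : Set (Fin k × Fin k))
    (hM : baseSet k ⊆ M) : ((gridGraph k).induce M).Connected := by
  have hk0 : 0 < k := by omega
  have hbase : ∀ (i j : Fin k), j.val = 0 ∨ Odd i.val → (i, j) ∈ M := by
    intro i j h; exact hM h
  have h00 : ((⟨0, hk0⟩ : Fin k), (⟨0, hk0⟩ : Fin k)) ∈ M :=
    hbase _ _ (Or.inl rfl)
  set G' := (gridGraph k).induce M with hG'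
  have rowA : ∀ (i : ℕ) (hi : i < k), G'.Reachable
      ⟨(⟨i, hi⟩, ⟨0, hk0⟩), hbase _ _ (Or.inl rfl)⟩ ⟨(⟨0, hk0⟩, ⟨0, hk0⟩), h00⟩ := by
    intro i
    induction i with
    | zero => intro hi; exact SimpleGraph.Reachable.refl _
    | succ n ih =>
      intro hi
      have hn : n < k := by omega
      refine SimpleGraph.Reachable.trans ?_ (ih hn)
      apply SimpleGraph.Adj.reachable
      show (gridGraph k).Adj _ _
      exact Or.inr ⟨rfl, Or.inr rfl⟩
  have colB : ∀ (i : Fin k) (hodd : Odd i.val) (j : ℕ) (hj : j < k), G'.Reachable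
      ⟨(i, ⟨j, hj⟩), hbase _ _ (Or.inr hodd)⟩ ⟨(i, ⟨0, hk0⟩), hbase _ _ (Or.inl rfl)⟩ := by
    intro i hodd j
    induction j with
    | zero => intro hj; exact SimpleGraph.Reachable.refl _
    | succ n ih =>
      intro hj
      have hn : n < k := by omega
      refine SimpleGraph.Reachable.trans ?_ (ih hn)
      apply SimpleGraph.Adj.reachable
      show (gridGraph k).Adj _ _
      exact Or.inl ⟨rfl, Or.inr rfl⟩
  have toRoot : ∀ (v : Fin k × Fin k) (hv : v ∈ M),
      G'.Reachable ⟨v, hv⟩ ⟨(⟨0, hk0⟩, ⟨0, hk0⟩), h00⟩ := by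
    rintro ⟨i, j⟩ hv
    rcases Nat.eq_zero_or_pos j.val with hj0 | hjpos
    · have heq : (⟨(i, j), hv⟩ : ↥M) = ⟨(⟨i.val, i.isLt⟩, ⟨0, hk0⟩), hbase _ _ (Or.inl rfl)⟩ :=
        Subtype.ext (Prod.ext (Fin.ext rfl) (Fin.ext hj0))
      rw [heq]
      exact rowA i.val i.isLt
    · have colRow : ∀ (i' : Fin k) (hodd : Odd i'.val) (hm : (i', j) ∈ M),
          G'.Reachable ⟨(i', j), hm⟩ ⟨(⟨0, hk0⟩, ⟨0, hk0⟩), h00⟩ := by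
        intro i' hodd hm
        have s1 : G'.Reachable ⟨(i', j), hm⟩ ⟨(i', ⟨0, hk0⟩), hbase _ _ (Or.inl rfl)⟩ :=
          colB i' hodd j.val j.isLt
        have s2 : G'.Reachable ⟨(i', ⟨0, hk0⟩), hbase _ _ (Or.inl rfl)⟩ ⟨(⟨0, hk0⟩, ⟨0, hk0⟩), h00⟩ :=
          rowA i'.val i'.isLt
        exact s1.trans s2
      rcases Nat.even_or_odd i.val with hev | hodd
      · obtain ⟨i', hi'lt, hi'odd, hadj⟩ :
            ∃ i' : ℕ, ∃ h : i' < k, Odd i' ∧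
              (gridGraph k).Adj (i, j) (⟨i', h⟩, j) := by
          rcases Nat.lt_or_ge (i.val + 1) k with h1 | h1
          · exact ⟨i.val + 1, h1, by rcases hev with ⟨m, hm⟩; exact ⟨m, by omega⟩,
              Or.inr ⟨rfl, Or.inl rfl⟩⟩
          · have hi1 : 1 ≤ i.val := by
              by_contra h0
              have : i.val = 0 := by omega
              omega
            refine ⟨i.val - 1, by omega, ?_, Or.inr ⟨rfl, Or.inr (by simp; omega)⟩⟩
            rcases hev with ⟨m, hm⟩
            exact ⟨m - 1, by omega⟩
        have hmem : ((⟨i', hi'lt⟩ : Fin k), j) ∈ M := hbase _ _ (Or.inr hi'odd)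
        have hadj' : G'.Adj ⟨(i, j), hv⟩ ⟨(⟨i', hi'lt⟩, j), hmem⟩ := hadj
        exact hadj'.reachable.trans (colRow ⟨i', hi'lt⟩ hi'odd hmem)
      · exact colRow i hodd hv
  rw [SimpleGraph.connected_iff]
  refine ⟨fun u v => ?_, ⟨⟨_, h00⟩⟩⟩
  exact (toRoot u.val u.prop).trans (toRoot v.val v.prop).symm

/-- For `k ≥ 2`, the number of masks of the `k × k` grid (sets of vertices whose
induced subgraph in the `k × k` grid graph is connected) is at least
`2 ^ ((k - 1) * ⌈k / 2⌉)`, hence exponential in `k²`. -/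
theorem card_connected_masks_ge
    (k : ℕ) (hk : 2 ≤ k) :
    2 ^ ((k - 1) * ((k + 1) / 2)) ≤
      {M : Set (Fin k × Fin k) | ((gridGraph k).induce M).Connected}.ncard := by
  classical
  set q := (k + 1) / 2 with hqdef
  have hq : ∀ a : Fin q, 2 * a.val < k := by intro a; have := a.2; omega
  have hb : ∀ b : Fin (k - 1), b.val + 1 < k := by intro b; have := b.2; omega
  set f : Set (Fin q × Fin (k - 1)) → Set (Fin k × Fin k) :=
    fun T => baseSet k ∪
      {v | ∃ p ∈ T, v = ((⟨2 * p.1.val, hq p.1⟩ : Fin k), (⟨p.2.val + 1, hb p.2⟩ : Fin k))}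
    with hfdef
  have key : ∀ (T : Set (Fin q × Fin (k - 1))) (p : Fin q × Fin (k - 1)),
      p ∈ T ↔ ((⟨2 * p.1.val, hq p.1⟩ : Fin k), (⟨p.2.val + 1, hb p.2⟩ : Fin k)) ∈ f T := by
    intro T p
    constructor
    · intro hp; exact Or.inr ⟨p, hp, rfl⟩
    · rintro (hbase | ⟨p', hp', heq⟩)
      · exfalso
        rcases hbase with h | h
        · simp at h
        · rcases h with ⟨m, hm⟩; simp at hm; omega
      · have h1 : p'.1 = p.1 := by
          have := congrArg (fun v : Fin k × Fin k => v.1.val) heq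
          simp at this
          exact Fin.ext (by omega)
        have h2 : p'.2 = p.2 := by
          have := congrArg (fun v : Fin k × Fin k => v.2.val) heq
          simp at this
          exact Fin.ext this.symm
        have : p' = p := Prod.ext h1 h2
        rwa [← this]
  have hinj : Function.Injective f := by
    intro T1 T2 h
    ext p
    rw [key T1 p, key T2 p, h]
  have hmaps : ∀ T, f T ∈ {M : Set (Fin k × Fin k) | ((gridGraph k).induce M).Connected} := by
    intro T
    exact connected_of_base_subset hk _ Set.subset_union_left
  have hcard : 2 ^ ((k - 1) * q) =
      (Set.univ : Set (Set (Fin q × Fin (k - 1)))).ncard := by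
    rw [Set.ncard_univ, Nat.card_eq_fintype_card, Fintype.card_set, Fintype.card_prod,
      Fintype.card_fin, Fintype.card_fin, mul_comm]
  rw [hcard]
  exact Set.ncard_le_ncard_of_injOn f (fun T _ => hmaps T) (hinj.injOn) (Set.toFinite _)
end
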